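/- arXiv:2110.11784 — 5 statements merged into one kernel-verified Lean document; each statement's English description precedes it below -/
import Mathlib

section
/- The sorted-ℓ1 (SLOPE) function J(x) = Σ_{k=1}^{n} w_k |x|_{[k]}, where |x|_{[k]} denotes the k-th largest absolute entry of x, is a norm on ℝ^n whenever w_1 > 0 and w_1 ≥ w_2 ≥ ... ≥ w_n ≥ 0. -/
/-!
Both `|x|` sorted nonincreasingly and the weights are nonincreasing, so by the rearrangement
inequality `J x = max_σ ∑ₖ wₖ |x (σ k)|` over all permutations `σ`, the maximum being attained
at the sorting permutation. A maximum of seminorms is a seminorm, and a transposition `σ`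
bringing `i` to the front gives `J x ≥ w₀ |xᵢ|`, so `J` is definite.
-/

open Finset Matrix

/-- `kth v k` is the `(k+1)`-th largest entry of `v` (zero-indexed: `kth v 0` is the largest). -/
noncomputable def kth {n : ℕ} (v : Fin n → ℝ) (k : ℕ) : ℝ :=
  if h : k < n then v (Tuple.sort (fun i => -v i) ⟨k, h⟩) else 0

noncomputable def absKth {n : ℕ} (v : Fin n → ℝ) (k : ℕ) : ℝ :=
  kth (fun i => |v i|) k

noncomputable def slopeNorm {n : ℕ} (w : ℕ → ℝ) (x : Fin n → ℝ) : ℝ :=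
  ∑ k ∈ Finset.range n, w k * absKth x k

noncomputable def dualNorm {n : ℕ} (J : (Fin n → ℝ) → ℝ) (g : Fin n → ℝ) : ℝ :=
  sSup {t : ℝ | ∃ x : Fin n → ℝ, J x ≤ 1 ∧ t = ∑ i, g i * x i}

def dropIdx {n : ℕ} (ℓ : Fin n) (v : Fin n → ℝ) : Fin (n - 1) → ℝ :=
  fun j => if h : (j : ℕ) < (ℓ : ℕ) then v ⟨j, lt_trans h ℓ.isLt⟩
           else v ⟨(j : ℕ) + 1, by have := j.isLt; omega⟩

noncomputable def sortPerm {n : ℕ} (x : Fin n → ℝ) : Equiv.Perm (Fin n) :=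
  Tuple.sort fun i => -|x i|

section SlopeNorm

variable {n : ℕ} {w : ℕ → ℝ}

variable (w) in
lemma slopeNorm_eq_sum_sortPerm (x : Fin n → ℝ) :
    slopeNorm w x = ∑ k : Fin n, w k * |x (sortPerm x k)| := by
  rw [slopeNorm, ← Fin.sum_univ_eq_sum_range (fun k => w k * absKth x k) n]
  refine sum_congr rfl fun k _ => ?_
  simp [absKth, kth, sortPerm]

lemma antitone_abs_comp_sortPerm (x : Fin n → ℝ) :
    Antitone fun k => |x (sortPerm x k)| := by
  intro i j hij
  simpa [sortPerm] using Tuple.monotone_sort (fun i => -|x i|) hij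

lemma sum_mul_abs_comp_perm_le_slopeNorm (hw : Antitone fun k : Fin n => w k)
    (x : Fin n → ℝ) (σ : Equiv.Perm (Fin n)) :
    ∑ k : Fin n, w k * |x (σ k)| ≤ slopeNorm w x := by
  have hmono := hw.monovary (antitone_abs_comp_sortPerm x)
  calc ∑ k : Fin n, w k * |x (σ k)|
      = ∑ k : Fin n, w k * |x (sortPerm x (((sortPerm x)⁻¹ * σ) k))| := by simp
    _ ≤ ∑ k : Fin n, w k * |x (sortPerm x k)| := hmono.sum_mul_comp_perm_le_sum_mul
    _ = slopeNorm w x := (slopeNorm_eq_sum_sortPerm w x).symm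

variable (w) in
lemma sum_mul_abs_comp_perm_eq_slopeNorm (x : Fin n → ℝ) (σ : Equiv.Perm (Fin n))
    (hσ : Antitone fun k => |x (σ k)|) :
    ∑ k : Fin n, w k * |x (σ k)| = slopeNorm w x := by
  have hsorted : (fun i => -|x i|) ∘ σ = (fun i => -|x i|) ∘ sortPerm x :=
    Tuple.unique_monotone (fun i j hij => neg_le_neg (hσ hij))
      (Tuple.monotone_sort fun i => -|x i|)
  rw [slopeNorm_eq_sum_sortPerm]
  refine sum_congr rfl fun k _ => ?_
  rw [neg_inj.mp (congrFun hsorted k)]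

lemma slopeNorm_nonneg (hw : ∀ k : Fin n, 0 ≤ w k) (x : Fin n → ℝ) : 0 ≤ slopeNorm w x := by
  rw [slopeNorm_eq_sum_sortPerm]
  exact sum_nonneg fun k _ => mul_nonneg (hw k) (abs_nonneg _)

lemma mul_abs_le_slopeNorm (hw : Antitone fun k : Fin n => w k) (hw₀ : ∀ k : Fin n, 0 ≤ w k)
    (x : Fin n → ℝ) (i : Fin n) : w 0 * |x i| ≤ slopeNorm w x := by
  set σ := Equiv.swap ⟨0, i.pos⟩ i
  calc w 0 * |x i| = w (⟨0, i.pos⟩ : Fin n) * |x (σ ⟨0, i.pos⟩)| := by simp [σ]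
    _ ≤ ∑ k : Fin n, w k * |x (σ k)| :=
      single_le_sum (f := fun k : Fin n => w k * |x (σ k)|)
        (fun k _ => mul_nonneg (hw₀ k) (abs_nonneg _)) (mem_univ _)
    _ ≤ slopeNorm w x := sum_mul_abs_comp_perm_le_slopeNorm hw x σ

lemma slopeNorm_eq_zero_iff (hw : Antitone fun k : Fin n => w k) (hw₀ : ∀ k : Fin n, 0 ≤ w k)
    (hpos : 0 < w 0) {x : Fin n → ℝ} : slopeNorm w x = 0 ↔ x = 0 := by
  refine ⟨fun hx => funext fun i => ?_, fun hx => by simp [hx, slopeNorm_eq_sum_sortPerm]⟩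
  have hle : w 0 * |x i| ≤ 0 := hx ▸ mul_abs_le_slopeNorm hw hw₀ x i
  exact abs_nonpos_iff.mp (nonpos_of_mul_nonpos_right hle hpos)

variable (w) in
lemma slopeNorm_smul (a : ℝ) (x : Fin n → ℝ) :
    slopeNorm w (a • x) = |a| * slopeNorm w x := by
  have habs : (fun k => |(a • x) (sortPerm x k)|) = fun k => |a| * |x (sortPerm x k)| := by
    simp [abs_mul]
  have hanti : Antitone fun k => |(a • x) (sortPerm x k)| :=
    habs ▸ (antitone_abs_comp_sortPerm x).const_mul (abs_nonneg a)
  rw [← sum_mul_abs_comp_perm_eq_slopeNorm w _ _ hanti, slopeNorm_eq_sum_sortPerm, mul_sum]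
  refine sum_congr rfl fun k _ => ?_
  rw [congrFun habs k]
  ring

lemma slopeNorm_add_le (hw : Antitone fun k : Fin n => w k) (hw₀ : ∀ k : Fin n, 0 ≤ w k)
    (x y : Fin n → ℝ) : slopeNorm w (x + y) ≤ slopeNorm w x + slopeNorm w y := by
  set σ := sortPerm (x + y)
  calc slopeNorm w (x + y) = ∑ k : Fin n, w k * |x (σ k) + y (σ k)| :=
        slopeNorm_eq_sum_sortPerm w (x + y)
    _ ≤ ∑ k : Fin n, (w k * |x (σ k)| + w k * |y (σ k)|) :=
        sum_le_sum fun k _ => by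
          rw [← mul_add]
          exact mul_le_mul_of_nonneg_left (abs_add_le _ _) (hw₀ k)
    _ = ∑ k : Fin n, w k * |x (σ k)| + ∑ k : Fin n, w k * |y (σ k)| := sum_add_distrib
    _ ≤ slopeNorm w x + slopeNorm w y :=
        add_le_add (sum_mul_abs_comp_perm_le_slopeNorm hw x σ)
          (sum_mul_abs_comp_perm_le_slopeNorm hw y σ)

end SlopeNorm

theorem slopeNorm_is_norm_general {n : ℕ} (w : ℕ → ℝ)
    (hw0 : 0 < w 0) (hwa : ∀ i j : ℕ, i ≤ j → j < n → w j ≤ w i)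
    (hwn : 0 ≤ w (n - 1)) :
    (∀ x : Fin n → ℝ, 0 ≤ slopeNorm w x) ∧
    (∀ x : Fin n → ℝ, slopeNorm w x = 0 ↔ x = 0) ∧
    (∀ (a : ℝ) (x : Fin n → ℝ), slopeNorm w (a • x) = |a| * slopeNorm w x) ∧
    (∀ x y : Fin n → ℝ, slopeNorm w (x + y) ≤ slopeNorm w x + slopeNorm w y) := by
  have hanti : Antitone fun k : Fin n => w k := fun i j hij => hwa i j hij j.isLt
  have hnonneg : ∀ k : Fin n, 0 ≤ w k := fun k =>
    hwn.trans (hwa k (n - 1) (by omega) (by have := k.isLt; omega))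
  exact ⟨slopeNorm_nonneg hnonneg, fun _ => slopeNorm_eq_zero_iff hanti hnonneg hw0,
    slopeNorm_smul w, slopeNorm_add_le hanti hnonneg⟩

theorem slopeNorm_is_norm {n : ℕ} (hn : 0 < n) (w : ℕ → ℝ)
    (hw0 : 0 < w 0) (hwa : ∀ i j : ℕ, i ≤ j → j < n → w j ≤ w i)
    (hwn : 0 ≤ w (n - 1)) :
    (∀ x : Fin n → ℝ, 0 ≤ slopeNorm w x) ∧
    (∀ x : Fin n → ℝ, slopeNorm w x = 0 ↔ x = 0) ∧
    (∀ (a : ℝ) (x : Fin n → ℝ), slopeNorm w (a • x) = |a| * slopeNorm w x) ∧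
    (∀ x y : Fin n → ℝ, slopeNorm w (x + y) ≤ slopeNorm w x + slopeNorm w y) :=
  slopeNorm_is_norm_general w hw0 hwa hwn
end

section
/- Let J be the SLOPE norm with weights w_1 ≥ ... ≥ w_n ≥ 0, w_1 > 0. Its dual norm satisfies J^D(g) = max_{q ∈ {1,...,n}} ( Σ_{k=1}^{q} |g|_{[k]} ) / ( Σ_{k=1}^{q} w_k ), where |g|_{[k]} is the k-th largest absolute entry of g. -/
open Finset Matrix

/-!
The upper bound: by the rearrangement inequality `⟨g, x⟩ ≤ ∑ₖ |g|₍ₖ₎ |x|₍ₖ₎`, and if `D` is the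
maximal ratio then every partial sum of `|g|₍ₖ₎` is at most `D` times the corresponding partial sum
of `wₖ`; since `|x|₍ₖ₎` is antitone and nonnegative, summation by parts turns this into
`∑ₖ |g|₍ₖ₎ |x|₍ₖ₎ ≤ D J(x)`. The bound is attained: if the ratio is maximal at `q`, take the sign
pattern of `g` on its `q + 1` largest entries, scaled by `1 / (w₁ + ⋯ + w_{q+1})`.
-/

lemma sum_range_ite_lt {M : Type*} [AddCommMonoid M] (f : ℕ → M) {m n : ℕ} (hm : m ≤ n) :
    ∑ k ∈ range n, (if k < m then f k else 0) = ∑ k ∈ range m, f k := by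
  rw [← sum_filter]
  congr 1
  ext k
  simp only [mem_filter, mem_range]
  omega

theorem sum_mul_le_sum_mul_of_sum_range_le {a c b : ℕ → ℝ} {N : ℕ} (hb : Antitone b)
    (hb_nonneg : ∀ k, 0 ≤ b k) (h : ∀ m ≤ N, ∑ k ∈ range m, a k ≤ ∑ k ∈ range m, c k) :
    ∑ k ∈ range N, a k * b k ≤ ∑ k ∈ range N, c k * b k := by
  have hG : ∀ m ≤ N, 0 ≤ ∑ k ∈ range m, (c k - a k) := fun m hm => by
    rw [sum_sub_distrib]; linarith [h m hm]
  have hparts := sum_range_by_parts b (fun k => c k - a k) N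
  simp only [smul_eq_mul] at hparts
  have hsum : 0 ≤ ∑ k ∈ range N, b k * (c k - a k) := by
    rw [hparts, sub_nonneg]
    refine le_trans (sum_nonpos fun i hi => ?_) (mul_nonneg (hb_nonneg _) (hG N le_rfl))
    have hi : i + 1 ≤ N := by rw [mem_range] at hi; omega
    exact mul_nonpos_of_nonpos_of_nonneg (sub_nonpos.mpr (hb i.le_succ)) (hG _ hi)
  have hexp : ∑ k ∈ range N, b k * (c k - a k)
      = ∑ k ∈ range N, c k * b k - ∑ k ∈ range N, a k * b k := by
    rw [← sum_sub_distrib]; exact sum_congr rfl fun k _ => by ring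
  linarith

section SortedAbs

variable {n : ℕ}

noncomputable def absSort (v : Fin n → ℝ) : Equiv.Perm (Fin n) :=
  Tuple.sort fun i => -|v i|

lemma absKth_eq_abs_absSort (v : Fin n → ℝ) (k : Fin n) :
    absKth v k = |v (absSort v k)| := by
  simp [absKth, kth, absSort]

lemma absKth_of_le (v : Fin n → ℝ) {k : ℕ} (hk : n ≤ k) : absKth v k = 0 := by
  simp [absKth, kth, not_lt.mpr hk]

lemma absKth_nonneg (v : Fin n → ℝ) (k : ℕ) : 0 ≤ absKth v k := by
  unfold absKth kth
  split <;> simp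

lemma antitone_abs_comp_absSort (v : Fin n → ℝ) : Antitone fun k => |v (absSort v k)| :=
  fun _ _ hab => neg_le_neg_iff.mp (Tuple.monotone_sort (fun i => -|v i|) hab)

lemma antitone_absKth (v : Fin n → ℝ) : Antitone (absKth v) := by
  intro a b hab
  by_cases hb : b < n
  · rw [absKth_eq_abs_absSort v ⟨a, hab.trans_lt hb⟩, absKth_eq_abs_absSort v ⟨b, hb⟩]
    exact antitone_abs_comp_absSort v (Fin.mk_le_mk.mpr hab)
  · rw [absKth_of_le v (not_lt.mp hb)]
    exact absKth_nonneg v a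

lemma absKth_eq_of_antitone (v : Fin n → ℝ) (σ : Equiv.Perm (Fin n))
    (hσ : Antitone fun k => |v (σ k)|) (k : Fin n) : absKth v k = |v (σ k)| := by
  have hmono : Monotone ((fun i => -|v i|) ∘ σ) := fun _ _ hab => neg_le_neg (hσ hab)
  have hsort := congrFun (Tuple.comp_sort_eq_comp_iff_monotone.mpr hmono) k
  rw [absKth_eq_abs_absSort]
  simpa [absSort] using hsort.symm

lemma sum_abs_mul_abs_le_sum_absKth_mul (g x : Fin n → ℝ) :
    ∑ i, |g i| * |x i| ≤ ∑ k ∈ range n, absKth g k * absKth x k := by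
  have hmono : Monovary (fun k : Fin n => |g (absSort g k)|) (fun k => |x (absSort x k)|) :=
    fun i j hij => antitone_abs_comp_absSort g
      (le_of_lt (lt_of_not_ge fun hji => hij.not_ge (antitone_abs_comp_absSort x hji)))
  calc ∑ i, |g i| * |x i|
      = ∑ k, |g (absSort g k)| * |x (absSort x (((absSort x)⁻¹ * absSort g) k))| := by
        rw [← Equiv.sum_comp (absSort g)]
        simp
    _ ≤ ∑ k : Fin n, |g (absSort g k)| * |x (absSort x k)| :=
        hmono.sum_mul_comp_perm_le_sum_mul
    _ = ∑ k ∈ range n, absKth g k * absKth x k := by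
        rw [← Fin.sum_univ_eq_sum_range]
        simp only [absKth_eq_abs_absSort]

end SortedAbs

section Slope

variable {n : ℕ} (w : ℕ → ℝ)

theorem sum_mul_le_mul_slopeNorm {g : Fin n → ℝ} {D : ℝ}
    (h : ∀ m ≤ n, ∑ k ∈ range m, absKth g k ≤ D * ∑ k ∈ range m, w k) (x : Fin n → ℝ) :
    ∑ i, g i * x i ≤ D * slopeNorm w x := by
  have hpartial : ∀ m ≤ n, ∑ k ∈ range m, absKth g k ≤ ∑ k ∈ range m, D * w k := by
    simpa only [mul_sum] using h
  calc ∑ i, g i * x i ≤ ∑ i, |g i| * |x i| :=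
        sum_le_sum fun i _ => (le_abs_self _).trans (abs_mul _ _).le
    _ ≤ ∑ k ∈ range n, absKth g k * absKth x k := sum_abs_mul_abs_le_sum_absKth_mul g x
    _ ≤ ∑ k ∈ range n, D * w k * absKth x k :=
        sum_mul_le_sum_mul_of_sum_range_le (antitone_absKth x) (absKth_nonneg x) hpartial
    _ = D * slopeNorm w x := by
        simp only [slopeNorm, mul_sum, mul_assoc]

noncomputable def topSign (g : Fin n → ℝ) (m : ℕ) (c : ℝ) : Fin n → ℝ :=
  fun i => if ((absSort g).symm i : ℕ) < m then (if 0 ≤ g i then c else -c) else 0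

lemma absKth_topSign (g : Fin n → ℝ) {m : ℕ} (hm : m ≤ n) {c : ℝ} (hc : 0 ≤ c) (k : ℕ) :
    absKth (topSign g m c) k = if k < m then c else 0 := by
  have habs : ∀ i, |topSign g m c (absSort g i)| = if (i : ℕ) < m then c else 0 := by
    intro i
    simp only [topSign, Equiv.symm_apply_apply]
    split_ifs <;> simp [abs_of_nonneg hc]
  have hanti : Antitone fun k => |topSign g m c (absSort g k)| := by
    intro a b hab
    simp only [habs]
    split_ifs <;> first | rfl | exact hc | omega
  by_cases hk : k < n
  · simpa [habs] using absKth_eq_of_antitone _ (absSort g) hanti ⟨k, hk⟩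
  · rw [absKth_of_le _ (not_lt.mp hk), if_neg (by omega)]

theorem slopeNorm_topSign (g : Fin n → ℝ) {m : ℕ} (hm : m ≤ n) {c : ℝ} (hc : 0 ≤ c) :
    slopeNorm w (topSign g m c) = c * ∑ k ∈ range m, w k := by
  simp only [slopeNorm, absKth_topSign g hm hc, mul_ite, mul_zero, sum_range_ite_lt _ hm,
    ← sum_mul, mul_comm c]

theorem sum_mul_topSign (g : Fin n → ℝ) {m : ℕ} (hm : m ≤ n) (c : ℝ) :
    ∑ i, g i * topSign g m c i = c * ∑ k ∈ range m, absKth g k := by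
  have hterm : ∀ k : Fin n, g (absSort g k) * topSign g m c (absSort g k)
      = if (k : ℕ) < m then c * absKth g k else 0 := by
    intro k
    simp only [topSign, Equiv.symm_apply_apply, absKth_eq_abs_absSort]
    split_ifs with _ hg
    · rw [abs_of_nonneg hg, mul_comm]
    · rw [abs_of_neg (not_le.mp hg)]; ring
    · rw [mul_zero]
  rw [← Equiv.sum_comp (absSort g), Fintype.sum_congr _ _ hterm,
    Fin.sum_univ_eq_sum_range (fun k => if k < m then c * absKth g k else 0),
    sum_range_ite_lt _ hm, mul_sum]

end Slope

theorem slope_dualNorm_eq {n : ℕ} (hn : 0 < n) (w : ℕ → ℝ)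
    (hw0 : 0 < w 0) (hwa : ∀ i j : ℕ, i ≤ j → j < n → w j ≤ w i)
    (hwn : 0 ≤ w (n - 1)) (g : Fin n → ℝ) :
    dualNorm (slopeNorm w) g =
      (Finset.range n).sup' (Finset.nonempty_range_iff.mpr hn.ne')
        (fun q => (∑ k ∈ Finset.range (q + 1), absKth g k) /
                  (∑ k ∈ Finset.range (q + 1), w k)) := by
  set ratio : ℕ → ℝ := fun q => (∑ k ∈ range (q + 1), absKth g k) / (∑ k ∈ range (q + 1), w k)
  have hw_nonneg : ∀ k < n, 0 ≤ w k := fun k hk => hwn.trans (hwa k (n - 1) (by omega) (by omega))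
  have hw_sum_pos : ∀ q < n, 0 < ∑ k ∈ range (q + 1), w k := fun q hq =>
    sum_pos' (fun k hk => hw_nonneg k (by rw [mem_range] at hk; omega)) ⟨0, by simp, hw0⟩
  set D := (range n).sup' (nonempty_range_iff.mpr hn.ne') ratio
  have hpartial : ∀ m ≤ n, ∑ k ∈ range m, absKth g k ≤ D * ∑ k ∈ range m, w k := by
    rintro (_ | q) hq
    · simp
    · exact (div_le_iff₀ (hw_sum_pos q hq)).mp (le_sup' ratio (mem_range.mpr hq))
  obtain ⟨q, hq, hq_max⟩ : ∃ q ∈ range n, D = ratio q := exists_mem_eq_sup' _ ratio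
  rw [mem_range] at hq
  have hc : 0 ≤ (∑ k ∈ range (q + 1), w k)⁻¹ := inv_nonneg.mpr (hw_sum_pos q hq).le
  refine IsGreatest.csSup_eq ⟨⟨topSign g (q + 1) (∑ k ∈ range (q + 1), w k)⁻¹, ?_, ?_⟩, ?_⟩
  · rw [slopeNorm_topSign w g hq hc, inv_mul_cancel₀ (hw_sum_pos q hq).ne']
  · rw [sum_mul_topSign g hq, hq_max]
    exact div_eq_inv_mul _ _
  · rintro t ⟨x, hx, rfl⟩
    have hmax_nonneg : 0 ≤ ratio q :=
      div_nonneg (sum_nonneg fun k _ => absKth_nonneg g k) (hw_sum_pos q hq).le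
    calc _ ≤ D * slopeNorm w x := sum_mul_le_mul_slopeNorm w hpartial x
      _ ≤ D := mul_le_of_le_one_right (hq_max ▸ hmax_nonneg) hx
end

section
/- Let u* solve the dual SLOPE problem max_u ½‖y‖² − ½‖y − u‖² subject to Σ_{k=1}^{q} |Aᵀu|_{[k]} ≤ λ Σ_{k=1}^{q} w_k for all q ∈ {1,...,n}, and let x* be a (any) minimizer of the SLOPE primal problem. If for some index ℓ one has, for every q ∈ {1,...,n}, the strict inequality |aₗᵀ u*| + Σ_{k=1}^{q−1} |A_{∖ℓ}ᵀ u*|_{[k]} < λ Σ_{k=1}^{q} w_k (where A_{∖ℓ} is A with column ℓ removed), then x*_ℓ = 0. -/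
open Finset Matrix

/-!
By Abel summation against the nonincreasing nonnegative weights, the dual feasibility condition
on the partial sums of the sorted `|g|` is what makes `⟨g, h⟩ ≤ λ J(h)` hold for every `h`, and
conversely. First-order optimality of `x*` in the directions `h` and `±x*` therefore makes the
residual `r = y - A x*` dual feasible with `⟨r, A x*⟩ = λ J(x*)`. Expanding the dual objective,
optimality of `u*` against `r` gives `⟨u*, A x*⟩ ≥ ⟨r, A x*⟩ = λ J(x*)`. But the strict screening
inequalities leave room to enlarge `|(Aᵀ u*)_ℓ|` a little without losing dual feasibility, so if
`x*_ℓ ≠ 0` then `⟨u*, A x*⟩ = ⟨Aᵀ u*, x*⟩ < λ J(x*)`.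
-/

theorem sum_le_sum_range_card_of_antitone {M : Type*} [AddCommMonoid M] [PartialOrder M]
    [IsOrderedAddMonoid M] {a : ℕ → M} (ha : Antitone a) (K : Finset ℕ) :
    ∑ k ∈ K, a k ≤ ∑ k ∈ range #K, a k := by
  induction K using Finset.induction_on_max with
  | empty => simp
  | insert m K hlt ih =>
    have hm : m ∉ K := fun h => lt_irrefl m (hlt m h)
    have hK : #K ≤ m := by simpa using card_le_card fun k hk => mem_range.2 (hlt k hk)
    rw [sum_insert hm, card_insert_of_notMem hm, sum_range_succ, add_comm]
    exact add_le_add ih (ha hK)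

theorem sum_mul_le_sum_mul_of_sum_range_le_s8 {R : Type*} [CommRing R] [PartialOrder R]
    [IsOrderedRing R] {N : ℕ} {f a b : ℕ → R}
    (hf : ∀ k, k + 1 < N → f (k + 1) ≤ f k) (hf0 : 0 ≤ f (N - 1))
    (hab : ∀ q < N, ∑ k ∈ range (q + 1), a k ≤ ∑ k ∈ range (q + 1), b k) :
    ∑ k ∈ range N, f k * a k ≤ ∑ k ∈ range N, f k * b k := by
  have hD : ∀ q < N, 0 ≤ ∑ k ∈ range (q + 1), (b k - a k) := fun q hq => by
    rw [sum_sub_distrib]; exact sub_nonneg.2 (hab q hq)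
  suffices 0 ≤ ∑ k ∈ range N, f k • (b k - a k) by
    simpa [smul_eq_mul, mul_sub, sum_sub_distrib] using this
  rw [sum_range_by_parts]
  rcases Nat.eq_zero_or_pos N with rfl | hN
  · simp
  have hDN : 0 ≤ ∑ k ∈ range N, (b k - a k) := by
    simpa [Nat.sub_add_cancel hN] using hD (N - 1) (by omega)
  refine sub_nonneg.2 (le_trans (sum_nonpos fun i hi => ?_) (smul_nonneg hf0 hDN))
  rw [mem_range] at hi
  exact smul_nonpos_of_nonpos_of_nonneg (sub_nonpos.2 (hf i (by omega))) (hD i (by omega))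

theorem residual_dotProduct_mulVec_le {ι κ : Type*} [Fintype ι] [Fintype κ]
    {A : Matrix ι κ ℝ} {y : ι → ℝ} {J : (κ → ℝ) → ℝ} {lam c : ℝ} {x₀ h : κ → ℝ}
    (hmin : ∀ x : κ → ℝ, (1 / 2) * ∑ i, (y i - (A *ᵥ x₀) i) ^ 2 + lam * J x₀ ≤
      (1 / 2) * ∑ i, (y i - (A *ᵥ x) i) ^ 2 + lam * J x)
    (hJ : ∀ t ∈ Set.Ioc (0 : ℝ) 1, lam * J (x₀ + t • h) ≤ lam * J x₀ + t * c) :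
    (y - A *ᵥ x₀) ⬝ᵥ (A *ᵥ h) ≤ c := by
  set r := y - A *ᵥ x₀
  set a := A *ᵥ h
  have key : ∀ t ∈ Set.Ioc (0 : ℝ) 1, r ⬝ᵥ a ≤ c + (1 / 2 * (a ⬝ᵥ a)) * t := by
    intro t ht
    have hsq : ∑ i, (y i - (A *ᵥ (x₀ + t • h)) i) ^ 2 =
        ∑ i, (y i - (A *ᵥ x₀) i) ^ 2 - 2 * t * (r ⬝ᵥ a) + t ^ 2 * (a ⬝ᵥ a) := by
      simp only [dotProduct, mul_sum, ← sum_sub_distrib, ← sum_add_distrib]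
      refine sum_congr rfl fun i _ => ?_
      simp only [r, a, mulVec_add, mulVec_smul, Pi.add_apply, Pi.sub_apply, Pi.smul_apply,
        smul_eq_mul]
      ring
    have hmin_t := hmin (x₀ + t • h)
    rw [hsq] at hmin_t
    have : t * (r ⬝ᵥ a) ≤ t * (c + (1 / 2 * (a ⬝ᵥ a)) * t) := by nlinarith [hJ t ht]
    exact le_of_mul_le_mul_left this ht.1
  have hlim : Filter.Tendsto (fun t : ℝ => c + (1 / 2 * (a ⬝ᵥ a)) * t) (nhdsWithin 0 (Set.Ioi 0))
      (nhds c) := by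
    refine tendsto_nhdsWithin_of_tendsto_nhds ?_
    exact Continuous.tendsto' (by fun_prop) 0 c (by simp)
  exact ge_of_tendsto hlim (Filter.eventually_of_mem (Ioc_mem_nhdsGT one_pos) key)

theorem dotProduct_le_of_sum_sq_le {ι : Type*} [Fintype ι] {r u a : ι → ℝ}
    (h : ∑ i, (r i + a i - u i) ^ 2 ≤ ∑ i, a i ^ 2) : r ⬝ᵥ a ≤ u ⬝ᵥ a := by
  have hexp : ∑ i, (r i + a i - u i) ^ 2 =
      ∑ i, (r i - u i) ^ 2 + 2 * (r ⬝ᵥ a - u ⬝ᵥ a) + ∑ i, a i ^ 2 := by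
    simp only [dotProduct, mul_sum, ← sum_sub_distrib, ← sum_add_distrib]
    exact sum_congr rfl fun i _ => by ring
  nlinarith [sum_nonneg fun i (_ : i ∈ univ) => sq_nonneg (r i - u i)]

namespace Slope

variable {n : ℕ}

noncomputable def absSort (v : Fin n → ℝ) : Equiv.Perm (Fin n) :=
  Tuple.sort fun i => -|v i|

theorem absKth_of_lt (v : Fin n → ℝ) {k : ℕ} (hk : k < n) :
    absKth v k = |v (absSort v ⟨k, hk⟩)| := by
  simp only [absKth, kth, absSort, dif_pos hk]

theorem absKth_of_le (v : Fin n → ℝ) {k : ℕ} (hk : n ≤ k) : absKth v k = 0 := by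
  simp only [absKth, kth, dif_neg (not_lt.2 hk)]

theorem absKth_nonneg (v : Fin n → ℝ) (k : ℕ) : 0 ≤ absKth v k := by
  rcases lt_or_ge k n with hk | hk
  · rw [absKth_of_lt v hk]; exact abs_nonneg _
  · rw [absKth_of_le v hk]

theorem antitone_absKth (v : Fin n → ℝ) : Antitone (absKth v) := by
  intro k k' hkk'
  rcases lt_or_ge k' n with hk' | hk'
  · rw [absKth_of_lt v hk', absKth_of_lt v (hkk'.trans_lt hk')]
    exact neg_le_neg_iff.1 (Tuple.monotone_sort (fun i => -|v i|) (Fin.mk_le_mk.2 hkk'))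
  · rw [absKth_of_le v hk']; exact absKth_nonneg v k

theorem absKth_le {v : Fin n → ℝ} {C : ℝ} (hC : ∀ i, |v i| ≤ C) (hC0 : 0 ≤ C) (k : ℕ) :
    absKth v k ≤ C := by
  rcases lt_or_ge k n with hk | hk
  · rw [absKth_of_lt v hk]; exact hC _
  · rw [absKth_of_le v hk]; exact hC0

noncomputable def topSum (q : ℕ) (v : Fin n → ℝ) : ℝ :=
  ∑ k ∈ range q, absKth v k

theorem topSum_mono (v : Fin n → ℝ) : Monotone fun q => topSum q v := fun _ _ h =>
  sum_le_sum_of_subset_of_nonneg (range_subset_range.2 h) fun k _ _ => absKth_nonneg v k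

theorem topSum_eq_sum_abs (v : Fin n → ℝ) : topSum n v = ∑ i, |v i| := by
  rw [topSum, ← Fin.sum_univ_eq_sum_range, ← Equiv.sum_comp (absSort v) fun i => |v i|]
  exact sum_congr rfl fun k _ => absKth_of_lt v k.isLt

theorem sum_abs_le_topSum (v : Fin n → ℝ) {T : Finset (Fin n)} {q : ℕ} (hT : #T ≤ q) :
    ∑ i ∈ T, |v i| ≤ topSum q v := by
  set K := (T.map (absSort v).symm.toEmbedding).map Fin.valEmbedding
  have hsum : ∑ i ∈ T, |v i| = ∑ k ∈ K, absKth v k := by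
    simp only [K, sum_map]
    refine sum_congr rfl fun i _ => ?_
    simp [absKth_of_lt v (Fin.isLt _)]
  calc ∑ i ∈ T, |v i| = ∑ k ∈ K, absKth v k := hsum
    _ ≤ topSum #K v := sum_le_sum_range_card_of_antitone (antitone_absKth v) K
    _ ≤ topSum q v := topSum_mono v (by simpa [K] using hT)

noncomputable def topSet {q : ℕ} (hq : q ≤ n) (v : Fin n → ℝ) : Finset (Fin n) :=
  univ.map ((Fin.castLEEmb hq).trans (absSort v).toEmbedding)

theorem card_topSet {q : ℕ} (hq : q ≤ n) (v : Fin n → ℝ) : #(topSet hq v) = q := by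
  simp [topSet]

theorem sum_topSet {q : ℕ} (hq : q ≤ n) (v f : Fin n → ℝ) :
    ∑ i ∈ topSet hq v, f i = ∑ k : Fin q, f (absSort v (Fin.castLE hq k)) := by
  simp [topSet]

theorem topSum_eq_sum_topSet {q : ℕ} (hq : q ≤ n) (v : Fin n → ℝ) :
    topSum q v = ∑ i ∈ topSet hq v, |v i| := by
  rw [sum_topSet, topSum, ← Fin.sum_univ_eq_sum_range]
  exact sum_congr rfl fun k _ => absKth_of_lt v _

theorem topSum_add_le {q : ℕ} (hq : q ≤ n) (x z : Fin n → ℝ) :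
    topSum q (x + z) ≤ topSum q x + topSum q z := by
  have hT := (card_topSet hq (x + z)).le
  calc topSum q (x + z) = ∑ i ∈ topSet hq (x + z), |x i + z i| := topSum_eq_sum_topSet hq _
    _ ≤ ∑ i ∈ topSet hq (x + z), (|x i| + |z i|) := sum_le_sum fun i _ => abs_add_le _ _
    _ ≤ topSum q x + topSum q z := by
      rw [sum_add_distrib]; exact add_le_add (sum_abs_le_topSum x hT) (sum_abs_le_topSum z hT)

theorem topSum_smul_le {q : ℕ} (hq : q ≤ n) (c : ℝ) (x : Fin n → ℝ) :
    topSum q (c • x) ≤ |c| * topSum q x := by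
  calc topSum q (c • x) = |c| * ∑ i ∈ topSet hq (c • x), |x i| := by
        simp [topSum_eq_sum_topSet hq, abs_mul, mul_sum]
    _ ≤ |c| * topSum q x :=
        mul_le_mul_of_nonneg_left (sum_abs_le_topSum x (card_topSet hq _).le) (abs_nonneg c)

theorem dropIdx_eq_comp_succAbove {m : ℕ} (ℓ : Fin (m + 1)) (v : Fin (m + 1) → ℝ) :
    dropIdx ℓ v = v ∘ ℓ.succAbove := by
  funext j
  simp only [dropIdx, Function.comp_apply, Fin.succAbove, Fin.lt_def, Fin.val_castSucc]
  split_ifs <;> rfl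

theorem sum_abs_le_topSum_dropIdx {v : Fin n → ℝ} {ℓ : Fin n} {T : Finset (Fin n)} (hℓ : ℓ ∉ T)
    {q : ℕ} (hT : #T ≤ q) : ∑ i ∈ T, |v i| ≤ topSum q (dropIdx ℓ v) := by
  obtain ⟨m, rfl⟩ : ∃ m, n = m + 1 := ⟨n - 1, by have := ℓ.pos; omega⟩
  let e : Fin m ↪ Fin (m + 1) := ⟨ℓ.succAbove, Fin.succAbove_right_injective⟩
  have hsub : T ⊆ univ.map e := fun i hi => by
    obtain ⟨j, rfl⟩ := Fin.exists_succAbove_eq (ne_of_mem_of_not_mem hi hℓ)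
    exact mem_map_of_mem e (mem_univ j)
  obtain ⟨K, -, rfl⟩ := subset_map_iff.1 hsub
  rw [sum_map, dropIdx_eq_comp_succAbove]
  exact sum_abs_le_topSum (v ∘ ℓ.succAbove) (by simpa using hT)

section Weights

variable {w : ℕ → ℝ} (hwa : ∀ i j : ℕ, i ≤ j → j < n → w j ≤ w i) (hwn : 0 ≤ w (n - 1))
include hwa hwn

theorem slopeNorm_le_of_topSum_le {x : Fin n → ℝ} {b : ℕ → ℝ}
    (hb : ∀ q < n, topSum (q + 1) x ≤ ∑ k ∈ range (q + 1), b k) :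
    slopeNorm w x ≤ ∑ k ∈ range n, w k * b k :=
  sum_mul_le_sum_mul_of_sum_range_le_s8 (fun k hk => hwa k (k + 1) k.le_succ hk) hwn hb

theorem slopeNorm_add_le (x z : Fin n → ℝ) :
    slopeNorm w (x + z) ≤ slopeNorm w x + slopeNorm w z := by
  refine (slopeNorm_le_of_topSum_le hwa hwn (b := fun k => absKth x k + absKth z k)
    fun q hq => ?_).trans_eq ?_
  · rw [sum_add_distrib]; exact topSum_add_le hq _ _
  · simp [slopeNorm, mul_add, sum_add_distrib]

theorem slopeNorm_smul_le (c : ℝ) (x : Fin n → ℝ) :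
    slopeNorm w (c • x) ≤ |c| * slopeNorm w x := by
  refine (slopeNorm_le_of_topSum_le hwa hwn (b := fun k => |c| * absKth x k)
    fun q hq => ?_).trans_eq ?_
  · rw [← mul_sum]; exact topSum_smul_le hq _ _
  · simp [slopeNorm, mul_sum, mul_left_comm]

theorem slopeNorm_le_of_abs_le_one {h : Fin n → ℝ} {r : ℕ} (hr : r ≤ n) (h1 : ∀ i, |h i| ≤ 1)
    (hsum : ∑ i, |h i| ≤ r) : slopeNorm w h ≤ ∑ k ∈ range r, w k := by
  refine (slopeNorm_le_of_topSum_le hwa hwn (b := fun k => if k < r then 1 else 0)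
    fun q hq => ?_).trans_eq ?_
  · have hcount : ∑ k ∈ range (q + 1), (if k < r then (1 : ℝ) else 0) = min (q + 1 : ℝ) r := by
      have : (range (q + 1)).filter (· < r) = range (min (q + 1) r) := by
        ext k; simp only [mem_filter, mem_range]; omega
      simp [sum_boole, this]
    rw [hcount, le_min_iff]
    constructor
    · simpa [topSum] using sum_le_sum fun k (_ : k ∈ range (q + 1)) => absKth_le h1 zero_le_one k
    · calc topSum (q + 1) h ≤ topSum n h := topSum_mono h hq
        _ = ∑ i, |h i| := topSum_eq_sum_abs h
        _ ≤ r := hsum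
  · rw [← sum_range_add_sum_Ico _ hr, ← add_zero (∑ k ∈ range r, w k)]
    congr 1
    · exact sum_congr rfl fun k hk => by simp [mem_range.1 hk]
    · exact sum_eq_zero fun k hk => by simp [(mem_Ico.1 hk).1]

end Weights

def SlopeDualFeasible (w : ℕ → ℝ) (lam : ℝ) (g : Fin n → ℝ) : Prop :=
  ∀ q < n, topSum (q + 1) g ≤ lam * ∑ k ∈ range (q + 1), w k

variable {w : ℕ → ℝ} {lam : ℝ}

theorem SlopeDualFeasible.dotProduct_le {g : Fin n → ℝ} (hg : SlopeDualFeasible w lam g)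
    (x : Fin n → ℝ) : g ⬝ᵥ x ≤ lam * slopeNorm w x := by
  let c : ℕ → ℝ := fun k => if h : k < n then |g (absSort x ⟨k, h⟩)| else 0
  have hc : ∀ q (hq : q ≤ n), ∑ k ∈ range q, c k = ∑ i ∈ topSet hq x, |g i| := fun q hq => by
    rw [sum_topSet, ← Fin.sum_univ_eq_sum_range]
    exact sum_congr rfl fun k _ => dif_pos _
  calc g ⬝ᵥ x ≤ ∑ i, |x i| * |g i| :=
        sum_le_sum fun i _ => (le_abs_self _).trans_eq (by rw [abs_mul, mul_comm])
    _ = ∑ k ∈ range n, absKth x k * c k := by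
        rw [← Equiv.sum_comp (absSort x) fun i => |x i| * |g i|, ← Fin.sum_univ_eq_sum_range]
        exact sum_congr rfl fun k _ => by simp [c, absKth_of_lt x k.isLt]
    _ ≤ ∑ k ∈ range n, absKth x k * (lam * w k) := by
        refine sum_mul_le_sum_mul_of_sum_range_le_s8 (fun k _ => antitone_absKth x k.le_succ)
          (absKth_nonneg x _) fun q hq => ?_
        rw [hc (q + 1) hq, ← mul_sum]
        exact (sum_abs_le_topSum g (card_topSet hq x).le).trans (hg q hq)
    _ = lam * slopeNorm w x := by simp [slopeNorm, mul_sum, mul_left_comm, mul_comm]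

theorem SlopeDualFeasible.of_eq_of_ne {g g' : Fin n → ℝ} {ℓ : Fin n}
    (hg : SlopeDualFeasible w lam g) (hg' : ∀ i ≠ ℓ, g' i = g i)
    (hℓ : ∀ q < n, |g' ℓ| + topSum q (dropIdx ℓ g) ≤ lam * ∑ k ∈ range (q + 1), w k) :
    SlopeDualFeasible w lam g' := by
  intro q hq
  set T := topSet hq g'
  have hT : #T = q + 1 := card_topSet hq g'
  rw [topSum_eq_sum_topSet hq]
  by_cases hℓT : ℓ ∈ T
  · rw [← add_sum_erase T _ hℓT]
    refine le_trans (add_le_add le_rfl ?_) (hℓ q hq)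
    rw [sum_congr rfl fun i hi => by rw [hg' i (ne_of_mem_erase hi)]]
    exact sum_abs_le_topSum_dropIdx (notMem_erase ℓ T) (by simp [card_erase_of_mem hℓT, hT])
  · rw [sum_congr rfl fun i hi => by rw [hg' i (ne_of_mem_of_not_mem hi hℓT)]]
    exact (sum_abs_le_topSum g hT.le).trans (hg q hq)

theorem SlopeDualFeasible.dotProduct_lt {g x : Fin n → ℝ} {ℓ : Fin n}
    (hg : SlopeDualFeasible w lam g)
    (hscr : ∀ q < n, |g ℓ| + topSum q (dropIdx ℓ g) < lam * ∑ k ∈ range (q + 1), w k)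
    (hx : x ℓ ≠ 0) : g ⬝ᵥ x < lam * slopeNorm w x := by
  have hne : (range n).Nonempty := ⟨0, mem_range.2 ℓ.pos⟩
  set δ := (range n).inf' hne fun q =>
    lam * ∑ k ∈ range (q + 1), w k - (|g ℓ| + topSum q (dropIdx ℓ g))
  have hδ : 0 < δ := (lt_inf'_iff hne).2 fun q hq => sub_pos.2 (hscr q (mem_range.1 hq))
  -- Enlarging `|g ℓ|` by `δ` keeps `g` feasible but strictly increases its pairing with `x`.
  set g' := g + Pi.single ℓ (δ * SignType.sign (x ℓ))
  have hsign : |(SignType.sign (x ℓ) : ℝ)| ≤ 1 := by cases SignType.sign (x ℓ) <;> simp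
  have hg' : SlopeDualFeasible w lam g' := by
    refine hg.of_eq_of_ne (ℓ := ℓ) (fun i hi => by simp [g', hi]) fun q hq => ?_
    have hδq : δ ≤ _ := inf'_le _ (mem_range.2 hq)
    have : |g' ℓ| ≤ |g ℓ| + δ := by
      simpa [g'] using (abs_add_le _ _).trans (add_le_add le_rfl
        ((abs_mul _ _).trans_le (by rw [abs_of_pos hδ]; exact mul_le_of_le_one_right hδ.le hsign)))
    linarith
  have hpair : g' ⬝ᵥ x = g ⬝ᵥ x + δ * |x ℓ| := by
    simp [g', add_dotProduct, single_dotProduct, mul_assoc, sign_mul_self]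
  linarith [hg'.dotProduct_le x, mul_pos hδ (abs_pos.2 hx)]

theorem slopeDualFeasible_of_forall_dotProduct_le (hwa : ∀ i j : ℕ, i ≤ j → j < n → w j ≤ w i)
    (hwn : 0 ≤ w (n - 1)) (hlam : 0 ≤ lam) {g : Fin n → ℝ}
    (hg : ∀ h, g ⬝ᵥ h ≤ lam * slopeNorm w h) : SlopeDualFeasible w lam g := by
  intro q hq
  set T := topSet hq g
  set h : Fin n → ℝ := fun i => if i ∈ T then SignType.sign (g i) else 0
  have habs : ∀ i, |h i| ≤ 1 := fun i => by
    by_cases hi : i ∈ T <;> simp only [h, hi, if_true, if_false, abs_zero, zero_le_one]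
    cases SignType.sign (g i) <;> simp
  have hsum : ∑ i, |h i| ≤ (q + 1 : ℕ) := by
    calc ∑ i, |h i| ≤ ∑ i, if i ∈ T then (1 : ℝ) else 0 := sum_le_sum fun i _ => by
          by_cases hi : i ∈ T
          · simpa [hi] using habs i
          · simp [h, hi]
      _ = (q + 1 : ℕ) := by simp [T, card_topSet]
  calc topSum (q + 1) g = g ⬝ᵥ h := by
        simp [topSum_eq_sum_topSet hq, dotProduct, h, T, mul_ite, self_mul_sign]
    _ ≤ lam * slopeNorm w h := hg h
    _ ≤ lam * ∑ k ∈ range (q + 1), w k :=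
        mul_le_mul_of_nonneg_left (slopeNorm_le_of_abs_le_one hwa hwn hq habs hsum) hlam

section Optimality

variable {m : ℕ} {A : Matrix (Fin m) (Fin n) ℝ} {y : Fin m → ℝ} {xstar : Fin n → ℝ}
  (hwa : ∀ i j : ℕ, i ≤ j → j < n → w j ≤ w i) (hwn : 0 ≤ w (n - 1)) (hlam : 0 ≤ lam)
  (hmin : ∀ x : Fin n → ℝ,
    (1 / 2) * ∑ i, (y i - (A *ᵥ xstar) i) ^ 2 + lam * slopeNorm w xstar ≤
    (1 / 2) * ∑ i, (y i - (A *ᵥ x) i) ^ 2 + lam * slopeNorm w x)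
include hwa hwn hlam hmin

theorem transpose_mulVec_residual_dotProduct_le (h : Fin n → ℝ) :
    (Aᵀ *ᵥ (y - A *ᵥ xstar)) ⬝ᵥ h ≤ lam * slopeNorm w h := by
  rw [mulVec_transpose, ← dotProduct_mulVec]
  refine residual_dotProduct_mulVec_le hmin fun t ht => ?_
  calc lam * slopeNorm w (xstar + t • h)
      ≤ lam * (slopeNorm w xstar + |t| * slopeNorm w h) := mul_le_mul_of_nonneg_left
        ((slopeNorm_add_le hwa hwn _ _).trans (add_le_add le_rfl (slopeNorm_smul_le hwa hwn _ _)))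
        hlam
    _ = lam * slopeNorm w xstar + t * (lam * slopeNorm w h) := by
        rw [abs_of_pos ht.1]; ring

theorem residual_dotProduct_mulVec_self :
    (y - A *ᵥ xstar) ⬝ᵥ (A *ᵥ xstar) = lam * slopeNorm w xstar := by
  refine le_antisymm ?_ ?_
  · simpa [mulVec_transpose, dotProduct_mulVec] using
      transpose_mulVec_residual_dotProduct_le hwa hwn hlam hmin xstar
  · have hshrink := residual_dotProduct_mulVec_le (h := -xstar) (c := -(lam * slopeNorm w xstar))
      hmin fun t ht => by
        have hxt : xstar + t • -xstar = (1 - t) • xstar := by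
          rw [sub_smul, one_smul, smul_neg, sub_eq_add_neg]
        calc lam * slopeNorm w (xstar + t • -xstar)
            ≤ lam * (|1 - t| * slopeNorm w xstar) :=
              hxt ▸ mul_le_mul_of_nonneg_left (slopeNorm_smul_le hwa hwn _ _) hlam
          _ = lam * slopeNorm w xstar + t * -(lam * slopeNorm w xstar) := by
              rw [abs_of_nonneg (sub_nonneg.2 ht.2)]; ring
    rwa [mulVec_neg, dotProduct_neg, neg_le_neg_iff] at hshrink

end Optimality

end Slope

open Slope

theorem slope_safe_screening_general {m n : ℕ}
    (A : Matrix (Fin m) (Fin n) ℝ) (y : Fin m → ℝ)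
    (w : ℕ → ℝ)
    (hwa : ∀ i j : ℕ, i ≤ j → j < n → w j ≤ w i) (hwn : 0 ≤ w (n - 1))
    (lam : ℝ) (hlam : 0 < lam)
    (ustar : Fin m → ℝ)
    (hfeas : ∀ q < n, ∑ k ∈ Finset.range (q + 1), absKth (Aᵀ *ᵥ ustar) k ≤
        lam * ∑ k ∈ Finset.range (q + 1), w k)
    (hdualopt : ∀ u : Fin m → ℝ,
      (∀ q < n, ∑ k ∈ Finset.range (q + 1), absKth (Aᵀ *ᵥ u) k ≤
          lam * ∑ k ∈ Finset.range (q + 1), w k) →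
      (1 / 2) * ∑ i, (y i) ^ 2 - (1 / 2) * ∑ i, (y i - u i) ^ 2 ≤
      (1 / 2) * ∑ i, (y i) ^ 2 - (1 / 2) * ∑ i, (y i - ustar i) ^ 2)
    (xstar : Fin n → ℝ)
    (hmin : ∀ x : Fin n → ℝ,
        (1 / 2) * ∑ i, (y i - (A *ᵥ xstar) i) ^ 2 + lam * slopeNorm w xstar ≤
        (1 / 2) * ∑ i, (y i - (A *ᵥ x) i) ^ 2 + lam * slopeNorm w x)
    (ℓ : Fin n)
    (hscr : ∀ q < n, |∑ i, A i ℓ * ustar i| +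
        ∑ k ∈ Finset.range q, absKth (dropIdx ℓ (fun j => ∑ i, A i j * ustar i)) k <
        lam * ∑ k ∈ Finset.range (q + 1), w k) :
    xstar ℓ = 0 := by
  set r := y - A *ᵥ xstar
  have hr_feas : SlopeDualFeasible w lam (Aᵀ *ᵥ r) :=
    slopeDualFeasible_of_forall_dotProduct_le hwa hwn hlam.le
      (transpose_mulVec_residual_dotProduct_le hwa hwn hlam.le hmin)
  have hu : r ⬝ᵥ (A *ᵥ xstar) ≤ ustar ⬝ᵥ (A *ᵥ xstar) := by
    refine dotProduct_le_of_sum_sq_le ?_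
    have := hdualopt r hr_feas
    simp only [r, Pi.sub_apply, sub_sub_cancel, sub_add_cancel] at this ⊢
    linarith
  by_contra hx
  have hlt := SlopeDualFeasible.dotProduct_lt hfeas hscr hx
  rw [mulVec_transpose, ← dotProduct_mulVec] at hlt
  linarith [residual_dotProduct_mulVec_self hwa hwn hlam.le hmin]

theorem slope_safe_screening {m n : ℕ} (hn : 0 < n)
    (A : Matrix (Fin m) (Fin n) ℝ) (y : Fin m → ℝ)
    (w : ℕ → ℝ) (hw0 : 0 < w 0)
    (hwa : ∀ i j : ℕ, i ≤ j → j < n → w j ≤ w i) (hwn : 0 ≤ w (n - 1))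
    (lam : ℝ) (hlam : 0 < lam)
    (ustar : Fin m → ℝ)
    (hfeas : ∀ q < n, ∑ k ∈ Finset.range (q + 1), absKth (Aᵀ *ᵥ ustar) k ≤
        lam * ∑ k ∈ Finset.range (q + 1), w k)
    (hdualopt : ∀ u : Fin m → ℝ,
      (∀ q < n, ∑ k ∈ Finset.range (q + 1), absKth (Aᵀ *ᵥ u) k ≤
          lam * ∑ k ∈ Finset.range (q + 1), w k) →
      (1 / 2) * ∑ i, (y i) ^ 2 - (1 / 2) * ∑ i, (y i - u i) ^ 2 ≤
      (1 / 2) * ∑ i, (y i) ^ 2 - (1 / 2) * ∑ i, (y i - ustar i) ^ 2)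
    (xstar : Fin n → ℝ)
    (hmin : ∀ x : Fin n → ℝ,
        (1 / 2) * ∑ i, (y i - (A *ᵥ xstar) i) ^ 2 + lam * slopeNorm w xstar ≤
        (1 / 2) * ∑ i, (y i - (A *ᵥ x) i) ^ 2 + lam * slopeNorm w x)
    (ℓ : Fin n)
    (hscr : ∀ q < n, |∑ i, A i ℓ * ustar i| +
        ∑ k ∈ Finset.range q, absKth (dropIdx ℓ (fun j => ∑ i, A i j * ustar i)) k <
        lam * ∑ k ∈ Finset.range (q + 1), w k) :
    xstar ℓ = 0 :=
  slope_safe_screening_general A y w hwa hwn lam hlam ustar hfeas hdualopt xstar hmin ℓ hscr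
end

section
/- Let u* ∈ B(c, R) = { u : ‖u − c‖₂ ≤ R } and suppose u* is feasible for the SLOPE dual, i.e., Σ_{k=1}^{q}|Aᵀu*|_{[k]} ≤ λ Σ_{k=1}^{q} w_k for all q. Then for all ℓ, q ∈ {1,...,n} and all r ∈ {1,...,q}: |aₗᵀ u*| + Σ_{k=1}^{q−1} |A_{∖ℓ}ᵀ u*|_{[k]} ≤ |aₗᵀ c| + Σ_{k=r}^{q−1} |A_{∖ℓ}ᵀ c|_{[k]} + (q − r + 1) R + λ Σ_{k=1}^{r−1} w_k, assuming all columns of A have unit ℓ2 norm. -/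
open Finset Matrix

/-! Every entry of `Aᵀu*` is within `R` of the corresponding entry of `Aᵀc` (Cauchy–Schwarz with unit
columns), and moving all entries of a vector by at most `R` moves each order statistic by at most `R`.
So the `ℓ`-th term and the order statistics of rank `r, …, q-1` of `A_{∖ℓ}ᵀu*` are bounded by those of
`A_{∖ℓ}ᵀc` plus `R` each, while the first `r - 1` of them are bounded, since deleting an entry can only
lower order statistics, by the first `r - 1` of `Aᵀu*`, hence by `λ (w₁ + ⋯ + w_{r-1})` by
feasibility. -/

section OrderStatistics

variable {N M : ℕ}

lemma antitone_comp_sort (b : Fin N → ℝ) : Antitone (b ∘ Tuple.sort (fun i => -b i)) :=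
  fun _ _ hij => neg_le_neg_iff.mp (Tuple.monotone_sort (fun i => -b i) hij)

lemma kth_of_lt (b : Fin N → ℝ) {k : ℕ} (hk : k < N) :
    kth b k = b (Tuple.sort (fun i => -b i) ⟨k, hk⟩) :=
  dif_pos hk

lemma lt_card_filter_kth_le (b : Fin N → ℝ) {k : ℕ} (hk : k < N) :
    k < #{j | kth b k ≤ b j} := by
  set σ := Tuple.sort (fun i => -b i)
  have hsub : (Iic (⟨k, hk⟩ : Fin N)).map σ.toEmbedding ⊆ ({j | kth b k ≤ b j} : Finset _) := by
    intro j hj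
    obtain ⟨i, hi, rfl⟩ := mem_map.mp hj
    rw [mem_filter, kth_of_lt b hk]
    exact ⟨mem_univ _, antitone_comp_sort b (mem_Iic.mp hi)⟩
  simpa [Fin.card_Iic] using card_le_card hsub

lemma le_kth_of_lt_card (b : Fin N → ℝ) {k : ℕ} (hk : k < N) {t : ℝ}
    (h : k < #{j | t ≤ b j}) : t ≤ kth b k := by
  set σ := Tuple.sort (fun i => -b i)
  have hlarge : ¬ ({j | t ≤ b j} : Finset (Fin N)).map σ.symm.toEmbedding ⊆ Iio ⟨k, hk⟩ := by
    intro hsub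
    have := card_le_card hsub
    simp only [card_map, Fin.card_Iio] at this
    omega
  obtain ⟨i, hi, hki⟩ := not_subset.mp hlarge
  obtain ⟨j, hj, rfl⟩ := mem_map.mp hi
  rw [kth_of_lt b hk]
  calc t ≤ b j := (mem_filter.mp hj).2
    _ = b (σ (σ.symm j)) := by simp
    _ ≤ b (σ ⟨k, hk⟩) := antitone_comp_sort b (not_lt.mp (by simpa using hki))

lemma kth_le_kth_add {a : Fin N → ℝ} {b : Fin M → ℝ} (f : Fin N ↪ Fin M) {R : ℝ}
    (h : ∀ j, a j ≤ b (f j) + R) {k : ℕ} (hk : k < N) : kth a k ≤ kth b k + R := by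
  have hcard : #{j | kth a k ≤ a j} ≤ #{i | kth a k - R ≤ b i} := by
    refine card_le_card_of_injOn f (fun j hj => ?_) f.injective.injOn
    simp only [coe_filter, Set.mem_ofPred_eq, mem_univ, true_and] at hj ⊢
    linarith [h j]
  have hNM : N ≤ M := by simpa using Fintype.card_le_of_embedding f
  linarith [le_kth_of_lt_card b (hk.trans_le hNM) ((lt_card_filter_kth_le a hk).trans_le hcard)]

end OrderStatistics

def dropIdxEmb {n : ℕ} (ℓ : Fin n) : Fin (n - 1) ↪ Fin n where
  toFun j := if h : (j : ℕ) < ℓ then ⟨j, h.trans ℓ.isLt⟩ else ⟨j + 1, by omega⟩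
  inj' j₁ j₂ h := by
    have hval := congrArg Fin.val h
    dsimp only at hval
    split_ifs at hval <;> simp only at hval <;> exact Fin.ext (by omega)

lemma dropIdx_eq_comp {n : ℕ} (ℓ : Fin n) (v : Fin n → ℝ) : dropIdx ℓ v = v ∘ dropIdxEmb ℓ :=
  funext fun _ => (apply_dite v _ _ _).symm

section DropIdx

variable {n : ℕ} (ℓ : Fin n)

lemma absKth_dropIdx_le (v : Fin n → ℝ) {k : ℕ} (hk : k < n - 1) :
    absKth (dropIdx ℓ v) k ≤ absKth v k := by
  simpa [absKth] using
    kth_le_kth_add (dropIdxEmb ℓ) (R := 0) (fun j => by simp [dropIdx_eq_comp]) hk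

lemma absKth_dropIdx_le_add {u v : Fin n → ℝ} {R : ℝ} (h : ∀ j, |u j| ≤ |v j| + R) {k : ℕ}
    (hk : k < n - 1) : absKth (dropIdx ℓ u) k ≤ absKth (dropIdx ℓ v) k + R :=
  kth_le_kth_add (Function.Embedding.refl _) (fun j => by simpa [dropIdx_eq_comp] using h _) hk

end DropIdx

lemma abs_sum_mul_le_of_sum_sq_le {ι : Type*} [Fintype ι] {a x : ι → ℝ} {R : ℝ}
    (ha : ∑ i, a i ^ 2 = 1) (hx : ∑ i, x i ^ 2 ≤ R ^ 2) (hR : 0 ≤ R) :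
    |∑ i, a i * x i| ≤ R :=
  abs_le_of_sq_le_sq ((sum_mul_sq_le_sq_mul_sq univ a x).trans (by rw [ha, one_mul]; exact hx)) hR

lemma abs_sum_mul_le_abs_sum_mul_add {ι : Type*} [Fintype ι] {a u c : ι → ℝ} {R : ℝ}
    (ha : ∑ i, a i ^ 2 = 1) (hball : ∑ i, (u i - c i) ^ 2 ≤ R ^ 2) (hR : 0 ≤ R) :
    |∑ i, a i * u i| ≤ |∑ i, a i * c i| + R := by
  have hdiff : ∑ i, a i * u i - ∑ i, a i * c i = ∑ i, a i * (u i - c i) := by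
    simp only [mul_sub, sum_sub_distrib]
  have := abs_sum_mul_le_of_sum_sq_le ha hball hR
  rw [← hdiff] at this
  linarith [abs_sub_abs_le_abs_sub (∑ i, a i * u i) (∑ i, a i * c i)]

theorem slope_upper_bound_general {m n : ℕ}
    (A : Matrix (Fin m) (Fin n) ℝ)
    (hunit : ∀ j : Fin n, ∑ i, (A i j) ^ 2 = 1)
    (w : ℕ → ℝ)
    (lam : ℝ)
    (c : Fin m → ℝ) (R : ℝ) (hR : 0 ≤ R)
    (ustar : Fin m → ℝ)
    (hball : ∑ i, (ustar i - c i) ^ 2 ≤ R ^ 2)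
    (hfeas : ∀ q < n, ∑ k ∈ Finset.range (q + 1), absKth (Aᵀ *ᵥ ustar) k ≤
        lam * ∑ k ∈ Finset.range (q + 1), w k) :
    ∀ ℓ : Fin n, ∀ q < n, ∀ r ≤ q,
      |∑ i, A i ℓ * ustar i| +
        ∑ k ∈ Finset.range q, absKth (dropIdx ℓ (fun j => ∑ i, A i j * ustar i)) k ≤
      |∑ i, A i ℓ * c i| +
        ∑ k ∈ Finset.Ico r q, absKth (dropIdx ℓ (fun j => ∑ i, A i j * c i)) k +
        ((q - r + 1 : ℕ) : ℝ) * R + lam * ∑ k ∈ Finset.range r, w k := by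
  intro ℓ q hq r hr
  have hclose : ∀ j, |∑ i, A i j * ustar i| ≤ |∑ i, A i j * c i| + R :=
    fun j => abs_sum_mul_le_abs_sum_mul_add (hunit j) hball hR
  have hhead : ∑ k ∈ range r, absKth (dropIdx ℓ (fun j => ∑ i, A i j * ustar i)) k ≤
      lam * ∑ k ∈ range r, w k := by
    refine (sum_le_sum fun k hk => absKth_dropIdx_le ℓ _ (by simp at hk; omega)).trans ?_
    rcases r with _ | s
    · simp
    · exact hfeas s (by omega)
  have htail : ∑ k ∈ Ico r q, absKth (dropIdx ℓ (fun j => ∑ i, A i j * ustar i)) k ≤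
      ∑ k ∈ Ico r q, absKth (dropIdx ℓ (fun j => ∑ i, A i j * c i)) k + ((q - r : ℕ) : ℝ) * R := by
    refine (sum_le_sum fun k hk => absKth_dropIdx_le_add ℓ hclose (by simp at hk; omega)).trans_eq ?_
    rw [sum_add_distrib, sum_const, Nat.card_Ico, nsmul_eq_mul]
  rw [← sum_range_add_sum_Ico _ hr]
  push_cast
  linarith [hclose ℓ]

theorem slope_upper_bound {m n : ℕ} (hn : 0 < n)
    (A : Matrix (Fin m) (Fin n) ℝ)
    (hunit : ∀ j : Fin n, ∑ i, (A i j) ^ 2 = 1)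
    (w : ℕ → ℝ) (hw0 : 0 < w 0)
    (hwa : ∀ i j : ℕ, i ≤ j → j < n → w j ≤ w i) (hwn : 0 ≤ w (n - 1))
    (lam : ℝ) (hlam : 0 < lam)
    (c : Fin m → ℝ) (R : ℝ) (hR : 0 ≤ R)
    (ustar : Fin m → ℝ)
    (hball : ∑ i, (ustar i - c i) ^ 2 ≤ R ^ 2)
    (hfeas : ∀ q < n, ∑ k ∈ Finset.range (q + 1), absKth (Aᵀ *ᵥ ustar) k ≤
        lam * ∑ k ∈ Finset.range (q + 1), w k) :
    ∀ ℓ : Fin n, ∀ q < n, ∀ r ≤ q,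
      |∑ i, A i ℓ * ustar i| +
        ∑ k ∈ Finset.range q, absKth (dropIdx ℓ (fun j => ∑ i, A i j * ustar i)) k ≤
      |∑ i, A i ℓ * c i| +
        ∑ k ∈ Finset.Ico r q, absKth (dropIdx ℓ (fun j => ∑ i, A i j * c i)) k +
        ((q - r + 1 : ℕ) : ℝ) * R + lam * ∑ k ∈ Finset.range r, w k :=
  slope_upper_bound_general A hunit w lam c R hR ustar hball hfeas
end

section
/- Assume the entries of |Aᵀ c| are sorted nonincreasingly: |a₁ᵀ c| ≥ |a₂ᵀ c| ≥ ... ≥ |a_nᵀ c|, all columns of A are unit-norm, and define B_{q,ℓ} = |aₗᵀ c| + Σ_{k=r}^{q−1} |A_{∖ℓ}ᵀ c|_{[k]} + (q − r + 1) R + λ Σ_{k=1}^{r−1} w_k for fixed r ∈ {1,...,q}. Then for every q, the map ℓ ↦ B_{q,ℓ} is nonincreasing: ℓ < ℓ' implies B_{q,ℓ} ≥ B_{q,ℓ'}. -/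
open Finset Matrix

/-
Since `|Aᵀ c|` is sorted, deleting its `ℓ`-th entry leaves a sorted vector, whose `k`-th entry is
`u k` for `k < ℓ` and `u (k + 1)` otherwise (`u` the sorted absolute correlations). Moving `ℓ` to
`ℓ + 1` lowers the leading term by `u ℓ - u (ℓ + 1)` and raises at most one summand of the partial
sum, the one at position `ℓ`, by the same amount; the remaining terms do not depend on `ℓ`.
-/

lemma kth_of_antitone {N : ℕ} {v : Fin N → ℝ} (hv : Antitone v) {k : ℕ} (hk : k < N) :
    kth v k = v ⟨k, hk⟩ := by
  have hmono : Monotone fun i => -v i := fun i j h => neg_le_neg (hv h)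
  rw [kth, dif_pos hk, Tuple.sort_eq_refl_iff_monotone.2 hmono]
  rfl

lemma dropIdx_map {N : ℕ} (ℓ : Fin N) (v : Fin N → ℝ) (f : ℝ → ℝ) :
    dropIdx ℓ (fun j => f (v j)) = fun j => f (dropIdx ℓ v j) := by
  funext j
  unfold dropIdx
  split_ifs <;> rfl

lemma Antitone.dropIdx {N : ℕ} {v : Fin N → ℝ} (hv : Antitone v) (ℓ : Fin N) :
    Antitone (dropIdx ℓ v) := by
  intro j j' h
  have h' : (j : ℕ) ≤ j' := h
  unfold _root_.dropIdx
  split_ifs <;> exact hv (Fin.mk_le_mk.2 (by omega))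

lemma absKth_dropIdx_of_antitone {N : ℕ} {v : Fin N → ℝ} (hv : Antitone fun j => |v j|)
    {u : ℕ → ℝ} (hu : ∀ j : Fin N, u j = |v j|) (ℓ : Fin N) {k : ℕ} (hk : k < N - 1) :
    absKth (dropIdx ℓ v) k = if k < ℓ then u k else u (k + 1) := by
  rw [absKth, ← dropIdx_map, kth_of_antitone (hv.dropIdx ℓ) hk]
  unfold dropIdx
  split_ifs
  · exact (hu ⟨k, by omega⟩).symm
  · exact (hu ⟨k + 1, by omega⟩).symm

lemma Antitone.antitone_add_sum_ite {u : ℕ → ℝ} (hu : Antitone u) (s : Finset ℕ) :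
    Antitone fun l => u l + ∑ k ∈ s, if k < l then u k else u (k + 1) := by
  refine antitone_nat_of_succ_le fun l => ?_
  have hstep : ∑ k ∈ s, (if k < l + 1 then u k else u (k + 1)) =
      ∑ k ∈ s, (if k < l then u k else u (k + 1)) + if l ∈ s then u l - u (l + 1) else 0 := by
    rw [← Finset.sum_ite_eq' s l (fun k => u k - u (k + 1)), ← Finset.sum_add_distrib]
    refine Finset.sum_congr rfl fun k _ => ?_
    split_ifs <;> first | omega | subst_vars; ring
  have hmono := hu (Nat.le_succ l)
  rw [hstep]
  split_ifs <;> linarith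

theorem B_nonincreasing_general {m n : ℕ} (A : Matrix (Fin m) (Fin n) ℝ) (c : Fin m → ℝ)
    (hsort : ∀ j j' : Fin n, j ≤ j' → |∑ i, A i j' * c i| ≤ |∑ i, A i j * c i|)
    (R : ℝ) (lam : ℝ)
    (w : ℕ → ℝ) :
    ∀ q < n, ∀ r ≤ q, ∀ ℓ ℓ' : Fin n, ℓ < ℓ' →
      |∑ i, A i ℓ' * c i| +
        ∑ k ∈ Finset.Ico r q, absKth (dropIdx ℓ' (fun j => ∑ i, A i j * c i)) k +
        ((q - r + 1 : ℕ) : ℝ) * R + lam * ∑ k ∈ Finset.range r, w k ≤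
      |∑ i, A i ℓ * c i| +
        ∑ k ∈ Finset.Ico r q, absKth (dropIdx ℓ (fun j => ∑ i, A i j * c i)) k +
        ((q - r + 1 : ℕ) : ℝ) * R + lam * ∑ k ∈ Finset.range r, w k := by
  intro q hq r _ ℓ ℓ' hℓ
  obtain ⟨N, rfl⟩ : ∃ N, n = N + 1 := ⟨n - 1, by omega⟩
  set v : Fin (N + 1) → ℝ := fun j => ∑ i, A i j * c i
  have hv : Antitone fun j => |v j| := fun j j' h => hsort j j' h
  set u : ℕ → ℝ := fun k => |v (Fin.clamp k N)|
  have hu : ∀ j : Fin (N + 1), u j = |v j| := fun j => by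
    simp only [u, Fin.clamp, Nat.min_eq_left (Nat.le_of_lt_succ j.isLt), Fin.eta]
  have hsum (l : Fin (N + 1)) : ∑ k ∈ Ico r q, absKth (dropIdx l v) k =
      ∑ k ∈ Ico r q, if k < l then u k else u (k + 1) :=
    Finset.sum_congr rfl fun k hk =>
      absKth_dropIdx_of_antitone hv hu l (by simp only [Finset.mem_Ico] at hk; omega)
  have hu_anti : Antitone u := hv.comp_monotone Fin.clamp_monotone
  have key := hu_anti.antitone_add_sum_ite (Ico r q) hℓ.le
  beta_reduce at key
  rw [hu, hu] at key
  rw [hsum, hsum]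
  linarith

theorem B_nonincreasing {m n : ℕ} (A : Matrix (Fin m) (Fin n) ℝ) (c : Fin m → ℝ)
    (hsort : ∀ j j' : Fin n, j ≤ j' → |∑ i, A i j' * c i| ≤ |∑ i, A i j * c i|)
    (hunit : ∀ j : Fin n, ∑ i, (A i j) ^ 2 = 1)
    (R : ℝ) (hR : 0 ≤ R) (lam : ℝ) (hlam : 0 < lam)
    (w : ℕ → ℝ) (hwa : ∀ i j : ℕ, i ≤ j → j < n → w j ≤ w i) (hwn : 0 ≤ w (n - 1)) :
    ∀ q < n, ∀ r ≤ q, ∀ ℓ ℓ' : Fin n, ℓ < ℓ' →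
      |∑ i, A i ℓ' * c i| +
        ∑ k ∈ Finset.Ico r q, absKth (dropIdx ℓ' (fun j => ∑ i, A i j * c i)) k +
        ((q - r + 1 : ℕ) : ℝ) * R + lam * ∑ k ∈ Finset.range r, w k ≤
      |∑ i, A i ℓ * c i| +
        ∑ k ∈ Finset.Ico r q, absKth (dropIdx ℓ (fun j => ∑ i, A i j * c i)) k +
        ((q - r + 1 : ℕ) : ℝ) * R + lam * ∑ k ∈ Finset.range r, w k :=
  B_nonincreasing_general A c hsort R lam w
end
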